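/- (Theorem 2, HashTran-DNN classification accuracy / doubling does not increase distortion.) Let (Ω, 𝔽, ℙ) be a probability space, K a positive integer, c ∈ ℝ a constant, and Y₁,…,Y_{2K} integrable real-valued random variables on Ω such that the random vector (Y₁,…,Y_K) is identically distributed with the random vector (Y_{K+1},…,Y_{2K}). Then E[ | c − (1/(2K)) Σ_{j=1}^{2K} Y_j | ] ≤ E[ | c − (1/K) Σ_{j=1}^{K} Y_j | ]. In particular, doubling the number K of hash functions in a hashing transformation does not increase the expected distortion of the normalized Hamming distance. -/
import Mathlib


open MeasureTheory ProbabilityTheory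

/-- Theorem 2 (HashTran-DNN classification accuracy): doubling the number of hash
functions does not increase the expected distortion. Given integrable real random
variables `Y₁,…,Y_{2K}` (indexed by `Fin (K + K)`) such that the random vector of
the first `K` of them is identically distributed with the random vector of the
last `K`, we have
`E[|c - (1/(2K)) Σ_{j=1}^{2K} Y_j|] ≤ E[|c - (1/K) Σ_{j=1}^{K} Y_j|]`. -/
theorem doubling_does_not_increase_distortion {Ω : Type*} [MeasureSpace Ω]
    [IsProbabilityMeasure (ℙ : Measure Ω)]
    (K : ℕ) (hK : 0 < K) (c : ℝ) (Y : Fin (K + K) → Ω → ℝ)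
    (hInt : ∀ j, Integrable (Y j))
    (hid : IdentDistrib (fun ω (j : Fin K) => Y (Fin.castAdd K j) ω)
                        (fun ω (j : Fin K) => Y (Fin.natAdd K j) ω) ℙ ℙ) :
    ∫ ω, |c - (1 / (2 * K : ℝ)) * ∑ j : Fin (K + K), Y j ω| ≤
      ∫ ω, |c - (1 / (K : ℝ)) * ∑ j : Fin K, Y (Fin.castAdd K j) ω| := by
  have hKpos : (0:ℝ) < (K:ℝ) := by exact_mod_cast hK
  set f₁ : Ω → ℝ := fun ω => |c - (1 / (K : ℝ)) * ∑ j : Fin K, Y (Fin.castAdd K j) ω|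
  set f₂ : Ω → ℝ := fun ω => |c - (1 / (K : ℝ)) * ∑ j : Fin K, Y (Fin.natAdd K j) ω|
  have hInt₁ : Integrable f₁ := by
    refine ((integrable_const c).sub ((integrable_finset_sum _
      (fun j _ => hInt (Fin.castAdd K j))).const_mul _)).abs
  have hInt₂ : Integrable f₂ := by
    refine ((integrable_const c).sub ((integrable_finset_sum _
      (fun j _ => hInt (Fin.natAdd K j))).const_mul _)).abs
  have hg : Measurable fun v : Fin K → ℝ => |c - (1 / (K : ℝ)) * ∑ j, v j| := by
    measurability
  have heq : ∫ ω, f₂ ω = ∫ ω, f₁ ω := ((hid.symm.comp hg).integral_eq)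
  have hpt : ∀ ω, |c - (1 / (2 * K : ℝ)) * ∑ j : Fin (K + K), Y j ω| ≤
      (1/2) * f₁ ω + (1/2) * f₂ ω := by
    intro ω
    have hsum : ∑ j : Fin (K + K), Y j ω =
        (∑ j : Fin K, Y (Fin.castAdd K j) ω) + ∑ j : Fin K, Y (Fin.natAdd K j) ω :=
      Fin.sum_univ_add _
    have hdec : c - (1 / (2 * K : ℝ)) * ∑ j : Fin (K + K), Y j ω =
        (1/2) * (c - (1 / (K : ℝ)) * ∑ j : Fin K, Y (Fin.castAdd K j) ω) +
        (1/2) * (c - (1 / (K : ℝ)) * ∑ j : Fin K, Y (Fin.natAdd K j) ω) := by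
      rw [hsum]; field_simp; ring
    rw [hdec]
    calc |(1/2) * (c - (1 / (K : ℝ)) * ∑ j : Fin K, Y (Fin.castAdd K j) ω) +
        (1/2) * (c - (1 / (K : ℝ)) * ∑ j : Fin K, Y (Fin.natAdd K j) ω)|
        ≤ |(1/2) * (c - (1 / (K : ℝ)) * ∑ j : Fin K, Y (Fin.castAdd K j) ω)| +
          |(1/2) * (c - (1 / (K : ℝ)) * ∑ j : Fin K, Y (Fin.natAdd K j) ω)| := abs_add_le _ _
      _ = (1/2) * f₁ ω + (1/2) * f₂ ω := by
          rw [abs_mul, abs_mul, show |(1/2:ℝ)| = 1/2 from by norm_num]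
  have hIntL : Integrable (fun ω => |c - (1 / (2 * K : ℝ)) * ∑ j : Fin (K + K), Y j ω|) := by
    refine ((integrable_const c).sub ((integrable_finset_sum _
      (fun j _ => hInt j)).const_mul _)).abs
  calc ∫ ω, |c - (1 / (2 * K : ℝ)) * ∑ j : Fin (K + K), Y j ω|
      ≤ ∫ ω, ((1/2) * f₁ ω + (1/2) * f₂ ω) := by
        exact integral_mono hIntL (((hInt₁.const_mul _)).add (hInt₂.const_mul _)) hpt
    _ = ∫ ω, f₁ ω := by
        rw [integral_add (hInt₁.const_mul _) (hInt₂.const_mul _),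
          integral_const_mul, integral_const_mul, heq]
        ring
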